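/- arXiv:1410.4265 — 3 statements merged into one kernel-verified Lean document; each statement's English description precedes it below -/
import Mathlib

section
/- (Bi-Free Kac/Loeve Theorem, converse direction.) Let (A, φ) be a non-commutative probability space and let (T_1, S_1) and (T_2, S_2) be two-faced pairs in A that are bi-free, satisfy φ(T_k) = 0 = φ(S_k) for k ∈ {1,2}, are bi-free central limit distributions, and have equal second order (ℓ,r)-cumulants. Fix θ ∈ (0, π/2) and set T_3 = cos(θ)T_1 + sin(θ)T_2, S_3 = cos(θ)S_1 + sin(θ)S_2, T_4 = −sin(θ)T_1 + cos(θ)T_2, S_4 = −sin(θ)S_1 + cos(θ)S_2. Then (T_3, S_3) and (T_4, S_4) are bi-free. -/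
open Finset

namespace BiFreeNL

open scoped Classical

/-- `i` and `j` lie in a common block of `P`. -/
def SameBlock {n : ℕ} (P : Finset (Finset (Fin n))) (i j : Fin n) : Prop :=
  ∃ V ∈ P, i ∈ V ∧ j ∈ V

/-- `P` is a partition of `{1, …, n}` (blocks are nonempty, and every point lies in a
unique block). -/
def IsPartition {n : ℕ} (P : Finset (Finset (Fin n))) : Prop :=
  (∀ V ∈ P, V.Nonempty) ∧ ∀ i : Fin n, ∃! V : Finset (Fin n), V ∈ P ∧ i ∈ V

/-- `P` refines `Q` : every block of `P` is contained in a block of `Q`. -/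
def Refines {n : ℕ} (P Q : Finset (Finset (Fin n))) : Prop :=
  ∀ V ∈ P, ∃ W ∈ Q, V ⊆ W

/-- The rank of `i` in the total order `≺_χ`, which reads the left indices
(`χ = true`) in increasing order followed by the right indices (`χ = false`) in
decreasing order.  This is `s_χ⁻¹`. -/
def chiRank {n : ℕ} (χ : Fin n → Bool) (i : Fin n) : ℕ :=
  if χ i = true then ((univ : Finset (Fin n)).filter fun j => χ j = true ∧ j < i).card
  else ((univ : Finset (Fin n)).filter fun j => χ j = true).card
    + ((univ : Finset (Fin n)).filter fun j => χ j = false ∧ i < j).card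

/-- `P` is a bi-non-crossing partition with respect to `χ`, i.e. `s_χ⁻¹ · P` is
non-crossing; equivalently no two distinct blocks cross with respect to `≺_χ`. -/
def IsBiNonCrossing {n : ℕ} (χ : Fin n → Bool) (P : Finset (Finset (Fin n))) : Prop :=
  IsPartition P ∧
    ∀ u₁ v₁ u₂ v₂ : Fin n,
      chiRank χ u₁ < chiRank χ v₁ → chiRank χ v₁ < chiRank χ u₂ →
        chiRank χ u₂ < chiRank χ v₂ →
        SameBlock P u₁ u₂ → SameBlock P v₁ v₂ → SameBlock P u₁ v₁

/-- The (finite) set `BNC(χ)` of bi-non-crossing partitions with respect to `χ`. -/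
noncomputable def BNC {n : ℕ} (χ : Fin n → Bool) : Finset (Finset (Finset (Fin n))) :=
  Finset.univ.filter fun P => IsBiNonCrossing χ P

/-- The maximal element `1_χ` of `BNC(χ)` : the partition with a single block. -/
def onePart (n : ℕ) : Finset (Finset (Fin n)) := {(Finset.univ : Finset (Fin n))}

/-- `μ` is the Möbius function of the lattice `BNC(χ)` : it vanishes off the
refinement order, and satisfies the two defining convolution identities. -/
def IsMoebius {n : ℕ} (χ : Fin n → Bool)
    (μ : Finset (Finset (Fin n)) → Finset (Finset (Fin n)) → ℂ) : Prop :=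
  (∀ P Q, ¬ Refines P Q → μ P Q = 0) ∧
  (∀ P Q, P ∈ BNC χ → Q ∈ BNC χ → Refines P Q →
    (∑ t ∈ (BNC χ).filter fun t => Refines P t ∧ Refines t Q, μ t Q)
      = if P = Q then 1 else 0) ∧
  (∀ P Q, P ∈ BNC χ → Q ∈ BNC χ → Refines P Q →
    (∑ t ∈ (BNC χ).filter fun t => Refines P t ∧ Refines t Q, μ P t)
      = if P = Q then 1 else 0)

/-- A family of Möbius functions, one for each `n` and `χ`. -/
def MoebiusFamily : Type :=
  ∀ n : ℕ, (Fin n → Bool) → Finset (Finset (Fin n)) → Finset (Finset (Fin n)) → ℂ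

variable {A : Type*} [Ring A] [Algebra ℂ A]

/-- `φ_π(Z_1, …, Z_n) = ∏_{V ∈ π} φ(Z_{k_1} ⋯ Z_{k_m})`, the product over the blocks
`V = {k_1 < ⋯ < k_m}` of `π` of the moments along the blocks. -/
noncomputable def phiPart {n : ℕ} (φ : A →ₗ[ℂ] ℂ) (Z : Fin n → A)
    (P : Finset (Finset (Fin n))) : ℂ :=
  ∏ V ∈ P, φ ((V.sort (· ≤ ·)).map Z).prod

/-- The `(ℓ, r)`-cumulant `κ_P(Z_1, …, Z_n) = ∑_{σ ∈ BNC(χ), σ ≤ P} φ_σ(Z) μ(σ, P)`. -/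
noncomputable def cumulant {n : ℕ} (φ : A →ₗ[ℂ] ℂ) (χ : Fin n → Bool)
    (μ : Finset (Finset (Fin n)) → Finset (Finset (Fin n)) → ℂ)
    (P : Finset (Finset (Fin n))) (Z : Fin n → A) : ℂ :=
  ∑ σ ∈ (BNC χ).filter fun σ => Refines σ P, phiPart φ Z σ * μ σ P


/-- The two-faced pairs `(T 0, S 0)` and `(T 1, S 1)` are bi-freely independent with
respect to `φ` : all mixed `(ℓ,r)`-cumulants vanish. -/
def TwoFacedBiFree {A : Type*} [Ring A] [Algebra ℂ A] (φ : A →ₗ[ℂ] ℂ)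
    (μ : MoebiusFamily) (T S : Fin 2 → A) : Prop :=
  ∀ (n : ℕ), 2 ≤ n → ∀ (χ : Fin n → Bool) (ε : Fin n → Fin 2), (∃ i j, ε i ≠ ε j) →
    cumulant φ χ (μ n χ) (onePart n)
      (fun i => if χ i = true then T (ε i) else S (ε i)) = 0

/-- `(T, S)` is a bi-free central limit distribution : all `(ℓ,r)`-cumulants of order
at least three vanish. -/
def IsBiFreeCentralLimit {A : Type*} [Ring A] [Algebra ℂ A] (φ : A →ₗ[ℂ] ℂ)
    (μ : MoebiusFamily) (T S : A) : Prop :=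
  ∀ (n : ℕ), 3 ≤ n → ∀ χ : Fin n → Bool,
    cumulant φ χ (μ n χ) (onePart n) (fun i => if χ i = true then T else S) = 0

/-- `(T 0, S 0)` and `(T 1, S 1)` have equal second order `(ℓ,r)`-cumulants. -/
def EqualSecondOrderCumulants {A : Type*} [Ring A] [Algebra ℂ A] (φ : A →ₗ[ℂ] ℂ)
    (μ : MoebiusFamily) (T S : Fin 2 → A) : Prop :=
  ∀ χ : Fin 2 → Bool,
    cumulant φ χ (μ 2 χ) (onePart 2) (fun i => if χ i = true then T 0 else S 0)
      = cumulant φ χ (μ 2 χ) (onePart 2) (fun i => if χ i = true then T 1 else S 1)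

/-!
The cumulants are multilinear, so a mixed cumulant of the rotated pairs expands into cumulants of
the original pairs, weighted by products of rotation coefficients. Bi-freeness of the original
pairs kills every term that draws on both of them, and the central limit property kills the pure
terms of order `≥ 3`. In order `2` the two pure cumulants are equal, and their weights add up to
`cos θ · (-sin θ) + sin θ · cos θ = 0`, the inner product of the two rows of the rotation.
-/

lemma sum_pi_eq_sum_const {ι κ M : Type*} [DecidableEq ι] [Fintype ι] [Nonempty ι] [Fintype κ]
    [AddCommMonoid M] (f : (ι → κ) → M) (hf : ∀ r : ι → κ, (∃ i j, r i ≠ r j) → f r = 0) :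
    ∑ r, f r = ∑ k, f (fun _ => k) := by
  refine Eq.trans ?_ (Finset.sum_map _ ⟨Function.const ι, Function.const_injective⟩ f)
  refine (Finset.sum_subset (Finset.subset_univ _) fun r _ hr => hf r ?_).symm
  by_contra! hconst
  obtain ⟨i₀⟩ := ‹Nonempty ι›
  exact hr (Finset.mem_map.mpr ⟨r i₀, Finset.mem_univ _, funext fun i => hconst i₀ i⟩)

section Multilinearity

lemma exists_prod_map_update_eq_mul_mul {ι M : Type*} [DecidableEq ι] [Monoid M]
    (Z : ι → M) (i : ι) {l : List ι} (hnd : l.Nodup) (hi : i ∈ l) :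
    ∃ p q : M, ∀ x : M, (l.map (Function.update Z i x)).prod = p * x * q := by
  obtain ⟨s, t, rfl⟩ := List.append_of_mem hi
  obtain ⟨-, hndt, hdisj⟩ := List.nodup_append.mp hnd
  have hmap : ∀ u : List ι, i ∉ u → ∀ x, u.map (Function.update Z i x) = u.map Z :=
    fun u hu x => List.map_congr_left fun a ha =>
      Function.update_of_ne (fun h : a = i => hu (h ▸ ha)) _ _
  refine ⟨(s.map Z).prod, (t.map Z).prod, fun x => ?_⟩
  rw [List.map_append, List.prod_append, List.map_cons, List.prod_cons, Function.update_self,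
    hmap s (fun h => hdisj i h i List.mem_cons_self rfl),
    hmap t (List.nodup_cons.mp hndt).1, mul_assoc]

lemma exists_phiPart_update_eq {n : ℕ} [DecidableEq (Fin n)] (φ : A →ₗ[ℂ] ℂ)
    {σ : Finset (Finset (Fin n))} (hσ : IsPartition σ) (Z : Fin n → A) (i : Fin n) :
    ∃ (p q : A) (C : ℂ), ∀ x : A,
      phiPart φ (Function.update Z i x) σ = φ (p * x * q) * C := by
  obtain ⟨V₀, ⟨hV₀, hiV₀⟩, huniq⟩ := hσ.2 i
  obtain ⟨p, q, hpq⟩ := exists_prod_map_update_eq_mul_mul Z i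
    (Finset.sort_nodup V₀ (· ≤ ·)) ((Finset.mem_sort _).mpr hiV₀)
  refine ⟨p, q, ∏ V ∈ σ.erase V₀, φ ((V.sort (· ≤ ·)).map Z).prod, fun x => ?_⟩
  have hnotin : ∀ V ∈ σ.erase V₀, i ∉ V := fun V hV hiV =>
    (Finset.mem_erase.mp hV).1 (huniq V ⟨Finset.mem_of_mem_erase hV, hiV⟩)
  rw [phiPart, ← Finset.mul_prod_erase σ _ hV₀, hpq]
  congr 1
  refine Finset.prod_congr rfl fun V hV => congrArg _ (congrArg _ ?_)
  exact List.map_congr_left fun a ha =>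
    Function.update_of_ne (fun h : a = i => hnotin V hV (h ▸ (Finset.mem_sort _).mp ha)) _ _

variable (φ : A →ₗ[ℂ] ℂ) {n : ℕ} (χ : Fin n → Bool)
  (μ : Finset (Finset (Fin n)) → Finset (Finset (Fin n)) → ℂ) (P : Finset (Finset (Fin n)))

lemma isPartition_of_mem_BNC {σ : Finset (Finset (Fin n))} (hσ : σ ∈ BNC χ) :
    IsPartition σ :=
  (Finset.mem_filter.mp hσ).2.1

lemma cumulant_update_add [DecidableEq (Fin n)] (Z : Fin n → A) (i : Fin n) (x y : A) :
    cumulant φ χ μ P (Function.update Z i (x + y))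
      = cumulant φ χ μ P (Function.update Z i x) + cumulant φ χ μ P (Function.update Z i y) := by
  rw [cumulant, cumulant, cumulant, ← Finset.sum_add_distrib]
  refine Finset.sum_congr rfl fun σ hσ => ?_
  obtain ⟨p, q, C, h⟩ :=
    exists_phiPart_update_eq φ (isPartition_of_mem_BNC χ (Finset.mem_filter.mp hσ).1) Z i
  rw [h, h, h, mul_add, add_mul, map_add]
  ring

lemma cumulant_update_smul [DecidableEq (Fin n)] (Z : Fin n → A) (i : Fin n) (c : ℂ) (x : A) :
    cumulant φ χ μ P (Function.update Z i (c • x))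
      = c • cumulant φ χ μ P (Function.update Z i x) := by
  rw [cumulant, cumulant, Finset.smul_sum]
  refine Finset.sum_congr rfl fun σ hσ => ?_
  obtain ⟨p, q, C, h⟩ :=
    exists_phiPart_update_eq φ (isPartition_of_mem_BNC χ (Finset.mem_filter.mp hσ).1) Z i
  rw [h, h, mul_smul_comm, smul_mul_assoc, map_smul, smul_eq_mul, smul_eq_mul]
  ring

noncomputable def cumulantMultilinear : MultilinearMap ℂ (fun _ : Fin n => A) ℂ where
  toFun := cumulant φ χ μ P
  map_update_add' Z i x y := cumulant_update_add φ χ μ P Z i x y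
  map_update_smul' Z i c x := cumulant_update_smul φ χ μ P Z i c x

lemma cumulant_sum_smul {κ : Type*} [Fintype κ] (coef : Fin n → κ → ℂ) (W : Fin n → κ → A) :
    cumulant φ χ μ P (fun i => ∑ k, coef i k • W i k)
      = ∑ r : Fin n → κ, (∏ i, coef i (r i)) * cumulant φ χ μ P (fun i => W i (r i)) := by
  classical
  refine ((cumulantMultilinear φ χ μ P).map_sum _).trans (Finset.sum_congr rfl fun r _ => ?_)
  exact (cumulantMultilinear φ χ μ P).map_smul_univ (fun i => coef i (r i)) (fun i => W i (r i))

lemma cumulant_mix (R : Fin 2 → Fin 2 → ℂ) (T S : Fin 2 → A) (ε : Fin n → Fin 2) :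
    cumulant φ χ μ P (fun i => if χ i = true then ∑ k, R (ε i) k • T k else ∑ k, R (ε i) k • S k)
      = ∑ r : Fin n → Fin 2, (∏ i, R (ε i) (r i)) *
          cumulant φ χ μ P (fun i => if χ i = true then T (r i) else S (r i)) := by
  rw [← cumulant_sum_smul φ χ μ P (fun i k => R (ε i) k)
    fun i k => if χ i = true then T k else S k]
  congr 1
  funext i
  split_ifs <;> rfl

end Multilinearity

theorem TwoFacedBiFree.orthogonal_mix {φ : A →ₗ[ℂ] ℂ} {μ : MoebiusFamily}
    {T S : Fin 2 → A} (hbf : TwoFacedBiFree φ μ T S)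
    (hclt : ∀ k, IsBiFreeCentralLimit φ μ (T k) (S k))
    (heq : EqualSecondOrderCumulants φ μ T S)
    (R : Fin 2 → Fin 2 → ℂ) (hR : ∑ k, R 0 k * R 1 k = 0) :
    TwoFacedBiFree φ μ (fun j => ∑ k, R j k • T k) (fun j => ∑ k, R j k • S k) := by
  intro n hn χ ε hε
  have : Nonempty (Fin n) := ⟨⟨0, by omega⟩⟩
  rw [cumulant_mix]
  refine (sum_pi_eq_sum_const _ fun r hr => by rw [hbf n hn χ r hr, mul_zero]).trans ?_
  obtain h3 | rfl : 3 ≤ n ∨ n = 2 := by omega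
  · exact Finset.sum_eq_zero fun k _ => by rw [hclt k n h3 χ, mul_zero]
  · have hbij : Function.Bijective ε := by revert ε hε; decide
    rw [Fin.sum_univ_two, hbij.prod_comp (R · 0), hbij.prod_comp (R · 1), Fin.prod_univ_two,
      Fin.prod_univ_two, ← heq χ]
    rw [Fin.sum_univ_two] at hR
    linear_combination (cumulant φ χ (μ 2 χ) (onePart 2)
      fun i => if χ i = true then T 0 else S 0) * hR

end BiFreeNL

open BiFreeNL in
theorem kac_loeve_converse_general
    {A : Type*} [Ring A] [Algebra ℂ A]
    (φ : A →ₗ[ℂ] ℂ)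
    (μ : MoebiusFamily)
    (T S : Fin 2 → A)
    (hbf : TwoFacedBiFree φ μ T S)
    (hclt : IsBiFreeCentralLimit φ μ (T 0) (S 0) ∧ IsBiFreeCentralLimit φ μ (T 1) (S 1))
    (heq : EqualSecondOrderCumulants φ μ T S)
    (θ : ℝ) :
    TwoFacedBiFree φ μ
      ![(Real.cos θ : ℂ) • T 0 + (Real.sin θ : ℂ) • T 1,
        (-(Real.sin θ : ℂ)) • T 0 + (Real.cos θ : ℂ) • T 1]
      ![(Real.cos θ : ℂ) • S 0 + (Real.sin θ : ℂ) • S 1,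
        (-(Real.sin θ : ℂ)) • S 0 + (Real.cos θ : ℂ) • S 1] := by
  set R : Fin 2 → Fin 2 → ℂ := ![![Real.cos θ, Real.sin θ], ![-Real.sin θ, Real.cos θ]]
  have hmix : ∀ U : Fin 2 → A, ![(Real.cos θ : ℂ) • U 0 + (Real.sin θ : ℂ) • U 1,
      (-(Real.sin θ : ℂ)) • U 0 + (Real.cos θ : ℂ) • U 1] = fun j => ∑ k, R j k • U k := by
    intro U
    funext j
    fin_cases j <;> simp [R, Fin.sum_univ_two]
  rw [hmix T, hmix S]
  exact hbf.orthogonal_mix (Fin.forall_fin_two.mpr hclt) heq R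
    (by simp [R, Fin.sum_univ_two]; ring)

open BiFreeNL in
/-- **Bi-Free Kac/Loeve Theorem, converse direction.** -/
theorem kac_loeve_converse
    {A : Type*} [Ring A] [Algebra ℂ A]
    (φ : A →ₗ[ℂ] ℂ) (hφ : φ 1 = 1)
    (μ : MoebiusFamily) (hμ : ∀ (n : ℕ) (χ : Fin n → Bool), IsMoebius χ (μ n χ))
    (T S : Fin 2 → A)
    (hcent : ∀ k, φ (T k) = 0 ∧ φ (S k) = 0)
    (hbf : TwoFacedBiFree φ μ T S)
    (hclt : IsBiFreeCentralLimit φ μ (T 0) (S 0) ∧ IsBiFreeCentralLimit φ μ (T 1) (S 1))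
    (heq : EqualSecondOrderCumulants φ μ T S)
    (θ : ℝ) (hθ : θ ∈ Set.Ioo 0 (Real.pi / 2)) :
    TwoFacedBiFree φ μ
      ![(Real.cos θ : ℂ) • T 0 + (Real.sin θ : ℂ) • T 1,
        (-(Real.sin θ : ℂ)) • T 0 + (Real.cos θ : ℂ) • T 1]
      ![(Real.cos θ : ℂ) • S 0 + (Real.sin θ : ℂ) • S 1,
        (-(Real.sin θ : ℂ)) • S 0 + (Real.cos θ : ℂ) • S 1] :=
  kac_loeve_converse_general φ μ T S hbf hclt heq θ
end

section
/- (Möbius inversion within Boolean bi-non-crossing partitions.) Let χ : {1,…,2n} → {ℓ,r} be alternating. Then for all π, σ ∈ BNC_b(χ) with π ≤ σ, one has Σ_{τ ∈ BNC_b(χ), π ≤ τ ≤ σ} μ_BNC(τ, σ) = Σ_{τ ∈ BNC_b(χ), π ≤ τ ≤ σ} μ_BNC(π, τ) = 1 if π = σ and 0 otherwise, where μ_BNC is the Möbius function of the full lattice BNC(χ). -/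
/-! Every partition coarser than a Boolean one is again Boolean, so `BNC_b(χ)` is an upper
set of `BNC(χ)`: for `π ∈ BNC_b(χ)` the interval `[π, σ]` of `BNC_b(χ)` is the whole interval
`[π, σ]` of `BNC(χ)`, and the two sums are the defining identities of `μ_BNC`. -/

open Finset

namespace BiFreeNL

open scoped Classical

/-- The alternating map `χ : {1, …, 2n} → {ℓ, r}` (left on odd positions, i.e. even
`Fin`-indices). -/
def altChi (n : ℕ) : Fin (2 * n) → Bool := fun i => decide ((i : ℕ) % 2 = 0)

/-- The index `2m - 1` (1-indexed), i.e. an odd (left) position. -/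
def dIdx {n : ℕ} (m : Fin n) : Fin (2 * n) := ⟨2 * (m : ℕ), by have := m.isLt; omega⟩

/-- The index `2m` (1-indexed), i.e. an even (right) position. -/
def dIdx' {n : ℕ} (m : Fin n) : Fin (2 * n) := ⟨2 * (m : ℕ) + 1, by have := m.isLt; omega⟩

/-- The Boolean bi-non-crossing partitions `BNC_b(χ)` for alternating `χ` : those
`π ∈ BNC(χ)` in which `2k - 1` and `2k` always share a block. -/
noncomputable def BNCb (n : ℕ) : Finset (Finset (Finset (Fin (2 * n)))) :=
  (BNC (altChi n)).filter fun P => ∀ m : Fin n, SameBlock P (dIdx m) (dIdx' m)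

theorem SameBlock.of_refines {m : ℕ} {P Q : Finset (Finset (Fin m))} {i j : Fin m}
    (hPQ : Refines P Q) (h : SameBlock P i j) : SameBlock Q i j := by
  obtain ⟨V, hV, hi, hj⟩ := h
  obtain ⟨W, hW, hVW⟩ := hPQ V hV
  exact ⟨W, hW, hVW hi, hVW hj⟩

theorem mem_BNCb_of_refines {n : ℕ} {π τ : Finset (Finset (Fin (2 * n)))}
    (hπ : π ∈ BNCb n) (hτ : τ ∈ BNC (altChi n)) (hπτ : Refines π τ) : τ ∈ BNCb n :=
  mem_filter.mpr ⟨hτ, fun m => (mem_filter.mp hπ).2 m |>.of_refines hπτ⟩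

theorem BNCb_filter_interval_eq {n : ℕ} {π : Finset (Finset (Fin (2 * n)))} (hπ : π ∈ BNCb n)
    (σ : Finset (Finset (Fin (2 * n)))) :
    ((BNCb n).filter fun τ => Refines π τ ∧ Refines τ σ)
      = (BNC (altChi n)).filter fun τ => Refines π τ ∧ Refines τ σ := by
  ext τ
  simp only [mem_filter]
  constructor
  · rintro ⟨hτ, hint⟩
    exact ⟨(mem_filter.mp hτ).1, hint⟩
  · rintro ⟨hτ, hπτ, hτσ⟩
    exact ⟨mem_BNCb_of_refines hπ hτ hπτ, hπτ, hτσ⟩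

end BiFreeNL

open BiFreeNL
open scoped Classical in
/-- **Möbius inversion within Boolean bi-non-crossing partitions.** -/
theorem moebius_inversion_in_BNCb
    (n : ℕ)
    (μ : Finset (Finset (Fin (2 * n))) → Finset (Finset (Fin (2 * n))) → ℂ)
    (hμ : IsMoebius (altChi n) μ)
    (π σ : Finset (Finset (Fin (2 * n))))
    (hπ : π ∈ BNCb n) (hσ : σ ∈ BNCb n) (hle : Refines π σ) :
    ((∑ τ ∈ (BNCb n).filter fun τ => Refines π τ ∧ Refines τ σ, μ τ σ)
        = if π = σ then 1 else 0)
    ∧ ((∑ τ ∈ (BNCb n).filter fun τ => Refines π τ ∧ Refines τ σ, μ π τ)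
        = if π = σ then 1 else 0) := by
  have hπBNC : π ∈ BNC (altChi n) := (mem_filter.mp hπ).1
  have hσBNC : σ ∈ BNC (altChi n) := (mem_filter.mp hσ).1
  rw [BNCb_filter_interval_eq hπ σ]
  exact ⟨hμ.2.1 π σ hπBNC hσBNC hle, hμ.2.2 π σ hπBNC hσBNC hle⟩
end

section
/- (Vanishing of non-Boolean moment terms in a bi-free Boolean system, scalar case.) Let (A, φ) be a non-commutative probability space and let {(C'_k, D'_k)}_{k∈K} be a bi-free Boolean system with respect to φ. Let χ : {1,…,2n} → {ℓ,r} be alternating and let ε : {1,…,2n} → K satisfy ε(2m−1) = ε(2m) for all m ∈ {1,…,n}. Let T_m ∈ C'_{ε(2m−1)} and S_m ∈ D'_{ε(2m)} for m ∈ {1,…,n}. If π ∈ BNC(χ) refines the partition of {1,…,2n} induced by ε (i.e. π ≤ ε), then φ_π(T_1, S_1, T_2, S_2, …, T_n, S_n) = 0 unless π ∈ BNC_b(χ). -/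
open Finset

namespace BiFreeNL

open scoped Classical

variable {A : Type*} [Ring A] [Algebra ℂ A]

/-- The family of pairs of faces `{(C k, D k)}_{k ∈ K}` is bi-freely independent with
respect to `φ` : `κ_{1_χ}(Z_1, …, Z_n) = 0` whenever `ε` is non-constant, `Z_j ∈ C (ε j)`
when `χ j = ℓ` and `Z_j ∈ D (ε j)` when `χ j = r`. -/
def BiFreeFamily {A : Type*} [Ring A] [Algebra ℂ A] {K : Type*} (φ : A →ₗ[ℂ] ℂ)
    (μ : MoebiusFamily) (C D : K → Set A) : Prop :=
  ∀ (n : ℕ), 2 ≤ n → ∀ (χ : Fin n → Bool) (ε : Fin n → K), (∃ i j, ε i ≠ ε j) →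
    ∀ Z : Fin n → A,
      (∀ i, (χ i = true → Z i ∈ C (ε i)) ∧ (χ i = false → Z i ∈ D (ε i))) →
      cumulant φ χ (μ n χ) (onePart n) Z = 0

/-- The subsets `{S k}_{k ∈ K}` are Boolean independent with respect to `φ` :
`φ(Z_1 ⋯ Z_n) = φ(Z_1) ⋯ φ(Z_n)` whenever `Z_m ∈ S (k m)` and consecutive indices
`k m` differ. -/
def BooleanIndependent {A : Type*} [Ring A] [Algebra ℂ A] {K : Type*} (φ : A →ₗ[ℂ] ℂ)
    (S : K → Set A) : Prop :=
  ∀ (n : ℕ) (k : Fin n → K), (∀ i j : Fin n, (j : ℕ) = (i : ℕ) + 1 → k i ≠ k j) →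
    ∀ Z : Fin n → A, (∀ i, Z i ∈ S (k i)) →
      φ (List.ofFn Z).prod = ∏ i, φ (Z i)

/-- The set of products `{T * S | T ∈ C, S ∈ D}`. -/
def prodSet {A : Type*} [Ring A] (C D : Set A) : Set A :=
  {x | ∃ T ∈ C, ∃ S ∈ D, x = T * S}


/-- `{(C' k, D' k)}_{k ∈ K}` is a bi-free Boolean system with respect to `φ` :
the subsets sit inside a bi-free family of pairs of faces, `ℂ·C'_k ⊆ C'_k`,
products of two elements of `C'_k` (or of `D'_k`) vanish, and alternating moments
starting and ending in the same face vanish. -/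
def BiFreeBooleanSystem {A : Type*} [Ring A] [Algebra ℂ A] {K : Type*} (φ : A →ₗ[ℂ] ℂ)
    (μ : MoebiusFamily) (C' D' : K → Set A) : Prop :=
  ∃ C D : K → Subalgebra ℂ A,
    BiFreeFamily φ μ (fun k => (C k : Set A)) (fun k => (D k : Set A)) ∧
    (∀ k, C' k ⊆ (C k : Set A)) ∧ (∀ k, D' k ⊆ (D k : Set A)) ∧
    (∀ k (z : ℂ), ∀ x ∈ C' k, z • x ∈ C' k) ∧
    (∀ k, ∀ x ∈ C' k, ∀ y ∈ C' k, x * y = 0) ∧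
    (∀ k, ∀ x ∈ D' k, ∀ y ∈ D' k, x * y = 0) ∧
    (∀ k (m : ℕ) (x : Fin (m + 1) → A) (y : Fin m → A),
      (∀ i, x i ∈ C' k) → (∀ i, y i ∈ D' k) →
      φ (x 0 * (List.ofFn fun i : Fin m => y i * x i.succ).prod) = 0) ∧
    (∀ k (m : ℕ) (y : Fin (m + 1) → A) (x : Fin m → A),
      (∀ i, y i ∈ D' k) → (∀ i, x i ∈ C' k) →
      φ (y 0 * (List.ofFn fun i : Fin m => x i * y i.succ).prod) = 0)

/-- The tuple `(T_1, S_1, T_2, S_2, …, T_n, S_n)`. -/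
def interleave {A : Type*} {n : ℕ} (T S : Fin n → A) : Fin (2 * n) → A :=
  fun i => if (i : ℕ) % 2 = 0 then T ⟨(i : ℕ) / 2, by have := i.isLt; omega⟩
           else S ⟨(i : ℕ) / 2, by have := i.isLt; omega⟩

end BiFreeNL

/-!
Within a block of `π` all letters come from one pair `(C'_k, D'_k)`. Two neighbouring letters of
the block from the same side multiply to zero, and an alternating word that begins and ends on the
same side has zero moment; so a block with nonzero moment alternates between left and right and
begins and ends on different sides. For the alternating `χ`, a bi-non-crossing partition all of
whose blocks look like this joins `T_m` with `S_m` for every `m`, by downward induction on `m`: if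
the pairs above `m` are joined but `T_m ∈ V` and `S_m ∈ W ≠ V`, then `T_m` is the last element of
`V`, whose first element is then some `S_j` with `j < m`, while the predecessor of `S_m` in `W` is
some `T_i` with `i < m`; but `T_i ≺ T_m ≺ S_m ≺ S_j` in the order of `χ`, a crossing.
-/

namespace List

variable {ι : Type*}

theorem prod_map_eq_zero_of_not_isChain {M : Type*} [MonoidWithZero M] {R : ι → ι → Prop}
    (Z : ι → M) : ∀ {l : List ι}, (∀ a ∈ l, ∀ b ∈ l, ¬ R a b → Z a * Z b = 0) →
      ¬ l.IsChain R → (l.map Z).prod = 0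
  | [], _, h => absurd .nil h
  | [_], _, h => absurd (.singleton _) h
  | a :: b :: l, hZ, h => by
    rw [isChain_cons_cons, not_and_or] at h
    rw [map_cons, prod_cons]
    rcases h with hab | hbl
    · rw [map_cons, prod_cons, ← mul_assoc,
        hZ a mem_cons_self b (mem_cons_of_mem _ mem_cons_self) hab, zero_mul]
    · rw [prod_map_eq_zero_of_not_isChain Z (fun x hx y hy => hZ x (mem_cons_of_mem _ hx) y
        (mem_cons_of_mem _ hy)) hbl, mul_zero]

theorem rel_of_isChain_of_consecutive {α : Type*} [LinearOrder α] {R : α → α → Prop} :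
    ∀ {l : List α}, l.Pairwise (· < ·) → l.IsChain R → ∀ {a b : α}, a ∈ l → b ∈ l → a < b →
      (∀ c ∈ l, c ≤ a ∨ b ≤ c) → R a b
  | [], _, _, _, _, ha, _, _, _ => absurd ha not_mem_nil
  | x :: l, hs, hc, a, b, ha, hb, hab, hbtw => by
    rw [pairwise_cons] at hs
    obtain rfl | ha := mem_cons.1 ha
    · obtain rfl | hb := mem_cons.1 hb
      · exact absurd hab (lt_irrefl _)
      cases l with
      | nil => exact absurd hb not_mem_nil
      | cons y l =>
        have hyb : y = b := by
          refine le_antisymm ?_ ((hbtw y (mem_cons_of_mem _ mem_cons_self)).resolve_left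
            (not_le.2 (hs.1 y mem_cons_self)))
          obtain rfl | hb := mem_cons.1 hb
          exacts [le_rfl, ((pairwise_cons.1 hs.2).1 b hb).le]
        exact hyb ▸ (isChain_cons_cons.1 hc).1
    · have hb : b ∈ l := (mem_cons.1 hb).resolve_left fun hbx =>
        absurd (hs.1 a ha) (not_lt.2 (hbx ▸ hab.le))
      exact rel_of_isChain_of_consecutive hs.2 hc.tail ha hb hab
        fun c hc => hbtw c (mem_cons_of_mem _ hc)

end List

namespace Finset

theorem exists_greatest_lt {α : Type*} [LinearOrder α] {s : Finset α} {x : α}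
    (h : ∃ y ∈ s, y < x) : ∃ p ∈ s, p < x ∧ ∀ c ∈ s, c ≤ p ∨ x ≤ c := by
  obtain ⟨y, hys, hyx⟩ := h
  have hne : (s.filter (· < x)).Nonempty := ⟨y, mem_filter.2 ⟨hys, hyx⟩⟩
  obtain ⟨hps, hpx⟩ := mem_filter.1 ((s.filter (· < x)).max'_mem hne)
  refine ⟨_, hps, hpx, fun c hc => ?_⟩
  by_cases hcx : c < x
  exacts [Or.inl (le_max' _ c (mem_filter.2 ⟨hc, hcx⟩)), Or.inr (not_lt.1 hcx)]

theorem exists_least_gt {α : Type*} [LinearOrder α] {s : Finset α} {x : α}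
    (h : ∃ y ∈ s, x < y) : ∃ q ∈ s, x < q ∧ ∀ c ∈ s, c ≤ x ∨ q ≤ c := by
  obtain ⟨y, hys, hxy⟩ := h
  have hne : (s.filter (x < ·)).Nonempty := ⟨y, mem_filter.2 ⟨hys, hxy⟩⟩
  obtain ⟨hqs, hxq⟩ := mem_filter.1 ((s.filter (x < ·)).min'_mem hne)
  refine ⟨_, hqs, hxq, fun c hc => ?_⟩
  by_cases hxc : x < c
  exacts [Or.inr (min'_le _ c (mem_filter.2 ⟨hc, hxc⟩)), Or.inl (not_lt.1 hxc)]

end Finset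

namespace BiFreeNL

variable {ι : Type*}

def IsAlternating (χ : ι → Bool) (l : List ι) : Prop :=
  l.IsChain (χ · ≠ χ ·) ∧ ∀ hl : l ≠ [], χ (l.head hl) ≠ χ (l.getLast hl)

theorem exists_prod_map_eq_alternating {M : Type*} [Monoid M] {X Y : Set M} (χ : ι → Bool)
    (Z : ι → M) (s : Bool) :
    ∀ {l : List ι} (hl : l ≠ []), (∀ i ∈ l, Z i ∈ if χ i = s then X else Y) →
      l.IsChain (χ · ≠ χ ·) → χ (l.head hl) = s → χ (l.getLast hl) = s →
      ∃ (m : ℕ) (x : Fin (m + 1) → M) (y : Fin m → M), (∀ i, x i ∈ X) ∧ (∀ i, y i ∈ Y) ∧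
        (l.map Z).prod = x 0 * (List.ofFn fun i : Fin m => y i * x i.succ).prod
  | [], hl, _, _, _, _ => absurd rfl hl
  | [a], _, hZ, _, (ha : χ a = s), _ =>
    ⟨0, fun _ => Z a, Fin.elim0, fun _ => by simpa [ha] using hZ a (by simp),
      fun i => i.elim0, by simp⟩
  | a :: b :: l, _, hZ, hchain, (ha : χ a = s), hlast => by
    obtain ⟨hab, hchain⟩ := List.isChain_cons_cons.1 hchain
    have hb : χ b ≠ s := ha ▸ hab.symm
    cases l with
    | nil => exact absurd hlast hb
    | cons c l =>
      have hc : χ c = s := by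
        rw [Bool.eq_not_of_ne (List.isChain_cons_cons.1 hchain).1.symm, Bool.eq_not_of_ne hb,
          Bool.not_not]
      obtain ⟨m, x, y, hx, hy, hprod⟩ := exists_prod_map_eq_alternating χ Z s
        (List.cons_ne_nil c l) (fun i hi => hZ i (by simp_all)) (List.isChain_cons_cons.1 hchain).2
        hc (by simpa using hlast)
      have hZa : Z a ∈ X := by simpa [ha] using hZ a (by simp)
      have hZb : Z b ∈ Y := by simpa [hb] using hZ b (by simp)
      refine ⟨m + 1, Fin.cons (Z a) x, Fin.cons (Z b) y, Fin.cases hZa hx, Fin.cases hZb hy, ?_⟩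
      rw [List.map_cons, List.map_cons, List.prod_cons, List.prod_cons, hprod, List.ofFn_succ,
        List.prod_cons]
      simp [mul_assoc]

theorem isAlternating_of_map_prod_ne_zero {A : Type*} [Semiring A] [Module ℂ A]
    (φ : A →ₗ[ℂ] ℂ) {X Y : Set A}
    (hXX : ∀ x ∈ X, ∀ y ∈ X, x * y = 0) (hYY : ∀ x ∈ Y, ∀ y ∈ Y, x * y = 0)
    (hXYX : ∀ (m : ℕ) (x : Fin (m + 1) → A) (y : Fin m → A), (∀ i, x i ∈ X) → (∀ i, y i ∈ Y) →
      φ (x 0 * (List.ofFn fun i : Fin m => y i * x i.succ).prod) = 0)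
    (hYXY : ∀ (m : ℕ) (y : Fin (m + 1) → A) (x : Fin m → A), (∀ i, y i ∈ Y) → (∀ i, x i ∈ X) →
      φ (y 0 * (List.ofFn fun i : Fin m => x i * y i.succ).prod) = 0)
    (χ : ι → Bool) (Z : ι → A) {l : List ι} (hZ : ∀ i ∈ l, Z i ∈ if χ i then X else Y)
    (h : φ (l.map Z).prod ≠ 0) : IsAlternating χ l := by
  have hchain : l.IsChain (χ · ≠ χ ·) := by
    by_contra hchain
    refine h ?_
    rw [List.prod_map_eq_zero_of_not_isChain Z (fun a ha b hb hab => ?_) hchain, map_zero]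
    have hZa := hZ a ha
    have hZb := hZ b hb
    rw [not_not.1 hab] at hZa
    cases hχb : χ b <;> simp only [hχb] at hZa hZb
    · exact hYY _ hZa _ hZb
    · exact hXX _ hZa _ hZb
  refine ⟨hchain, fun hl hends => h ?_⟩
  cases hs : χ (l.head hl)
  · obtain ⟨m, y, x, hy, hx, hprod⟩ := exists_prod_map_eq_alternating (X := Y) (Y := X) χ Z false
      hl (fun i hi => by cases hi' : χ i <;> simpa [hi'] using hZ i hi) hchain hs (hends ▸ hs)
    exact hprod ▸ hYXY m y x hy hx
  · obtain ⟨m, x, y, hx, hy, hprod⟩ := exists_prod_map_eq_alternating χ Z true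
      hl (fun i hi => by simpa using hZ i hi) hchain hs (hends ▸ hs)
    exact hprod ▸ hXYX m x y hx hy

section ChiRank

variable {N : ℕ} {χ : Fin N → Bool} {i j : Fin N}

theorem chiRank_lt_chiRank_of_left (hi : χ i = true) (hj : χ j = true) (hij : i < j) :
    chiRank χ i < chiRank χ j := by
  rw [chiRank, chiRank, if_pos hi, if_pos hj]
  refine card_lt_card ((ssubset_iff_of_subset fun k hk => ?_).2 ⟨i, ?_, ?_⟩)
  · simp only [mem_filter, mem_univ, true_and] at hk ⊢
    exact ⟨hk.1, hk.2.trans hij⟩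
  · simp [hi, hij]
  · simp

theorem chiRank_lt_chiRank_of_left_of_right (hi : χ i = true) (hj : χ j = false) :
    chiRank χ i < chiRank χ j := by
  rw [chiRank, chiRank, if_pos hi, if_neg (by simp [hj])]
  calc #{k | χ k = true ∧ k < i} < #{k | χ k = true} :=
        card_lt_card ((ssubset_iff_of_subset (by intro k; simp_all)).2 ⟨i, by simp [hi], by simp⟩)
    _ ≤ _ := Nat.le_add_right _ _

theorem chiRank_lt_chiRank_of_right (hi : χ i = false) (hj : χ j = false) (hij : i < j) :
    chiRank χ j < chiRank χ i := by
  rw [chiRank, chiRank, if_neg (by simp [hj]), if_neg (by simp [hi])]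
  refine Nat.add_lt_add_left (card_lt_card ((ssubset_iff_of_subset fun k hk => ?_).2
    ⟨j, ?_, ?_⟩)) _
  · simp only [mem_filter, mem_univ, true_and] at hk ⊢
    exact ⟨hk.1, hij.trans hk.2⟩
  · simp [hj, hij]
  · simp

end ChiRank

theorem mem_BNC_iff {N : ℕ} {χ : Fin N → Bool} {π : Finset (Finset (Fin N))} :
    π ∈ BNC χ ↔ IsBiNonCrossing χ π := by
  classical
  simp [BNC]

theorem IsPartition.eq_of_mem {N : ℕ} {π : Finset (Finset (Fin N))} (hπ : IsPartition π)
    {U V : Finset (Fin N)} (hU : U ∈ π) (hV : V ∈ π) {i : Fin N} (hiU : i ∈ U) (hiV : i ∈ V) :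
    U = V :=
  (hπ.2 i).unique ⟨hU, hiU⟩ ⟨hV, hiV⟩

section SortedBlock

variable {α : Type*} [LinearOrder α] {χ : α → Bool} {V : Finset α}

theorem IsAlternating.ne_of_consecutive (h : IsAlternating χ (V.sort (· ≤ ·))) {a b : α}
    (ha : a ∈ V) (hb : b ∈ V) (hab : a < b) (hbtw : ∀ c ∈ V, c ≤ a ∨ b ≤ c) : χ a ≠ χ b :=
  List.rel_of_isChain_of_consecutive (sortedLT_sort V).pairwise h.1 ((mem_sort _).2 ha)
    ((mem_sort _).2 hb) hab fun c hc => hbtw c ((mem_sort _).1 hc)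

theorem IsAlternating.min'_ne_max' (h : IsAlternating χ (V.sort (· ≤ ·))) (hV : V.Nonempty) :
    χ (V.min' hV) ≠ χ (V.max' hV) := by
  have hlen : 0 < (V.sort (· ≤ ·)).length := by simpa using hV.card_pos
  have := h.2 (List.length_pos_iff.1 hlen)
  rwa [List.head_eq_getElem, List.getLast_eq_getElem, sorted_zero_eq_min' (h := hlen),
    sorted_last_eq_max'] at this

end SortedBlock

variable {n : ℕ}

@[simp] theorem altChi_eq_true_iff (v : Fin (2 * n)) : altChi n v = true ↔ (v : ℕ) % 2 = 0 := by
  simp [altChi]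

@[simp] theorem altChi_eq_false_iff (v : Fin (2 * n)) : altChi n v = false ↔ (v : ℕ) % 2 = 1 := by
  simp [altChi]

@[simp] theorem val_dIdx (m : Fin n) : (dIdx m : ℕ) = 2 * m := rfl

@[simp] theorem val_dIdx' (m : Fin n) : (dIdx' m : ℕ) = 2 * m + 1 := rfl

theorem mem_of_div_two_eq {π : Finset (Finset (Fin (2 * n)))} (hπ : IsPartition π) {j : Fin n}
    (hj : SameBlock π (dIdx j) (dIdx' j)) {U : Finset (Fin (2 * n))} (hU : U ∈ π)
    {y z : Fin (2 * n)} (hy : (y : ℕ) / 2 = j) (hz : (z : ℕ) / 2 = j) (hyU : y ∈ U) : z ∈ U := by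
  obtain ⟨B, hB, hjB, hj'B⟩ := hj
  have hmemB : ∀ w : Fin (2 * n), (w : ℕ) / 2 = j → w ∈ B := fun w hw => by
    rcases Nat.mod_two_eq_zero_or_one w with hw' | hw'
    · exact (Fin.ext (by rw [val_dIdx]; omega) : w = dIdx j) ▸ hjB
    · exact (Fin.ext (by rw [val_dIdx']; omega) : w = dIdx' j) ▸ hj'B
  exact hπ.eq_of_mem hU hB hyU (hmemB y hy) ▸ hmemB z hz

theorem exists_mem_lt_dIdx' {m : Fin n} {W : Finset (Fin (2 * n))}
    (hW : IsAlternating (altChi n) (W.sort (· ≤ ·)))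
    (hpair : ∀ y z : Fin (2 * n), 2 * (m : ℕ) + 1 < y → (y : ℕ) / 2 = (z : ℕ) / 2 → y ∈ W → z ∈ W)
    (hmW : dIdx' m ∈ W) : ∃ p ∈ W, p < dIdx' m := by
  by_contra! hmin
  have hne : W.Nonempty := ⟨_, hmW⟩
  have hends := hW.min'_ne_max' hne
  rw [le_antisymm (min'_le _ _ hmW) (le_min' _ _ _ hmin)] at hends
  set M := W.max' hne
  have hM_even : (M : ℕ) % 2 = 0 := by simp [altChi] at hends; omega
  have hM_ge : 2 * (m : ℕ) + 1 ≤ M := le_max' _ _ hmW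
  have hM_lt : (M : ℕ) < 2 * n := M.isLt
  have hnext := le_max' W ⟨M + 1, by omega⟩
    (hpair M _ (by omega) (by simp only; omega) (max'_mem _ _))
  simp only [Fin.le_def] at hnext
  omega

theorem max'_eq_dIdx {m : Fin n} {V : Finset (Fin (2 * n))}
    (hV : IsAlternating (altChi n) (V.sort (· ≤ ·)))
    (hpair : ∀ y z : Fin (2 * n), 2 * (m : ℕ) + 1 < y → (y : ℕ) / 2 = (z : ℕ) / 2 → y ∈ V → z ∈ V)
    (hmV : dIdx m ∈ V) (hm'V : dIdx' m ∉ V) : V.max' ⟨_, hmV⟩ = dIdx m := by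
  by_contra hmax
  obtain ⟨q, hqV, hmq, hq⟩ := exists_least_gt
    ⟨_, max'_mem V _, lt_of_le_of_ne (le_max' _ _ hmV) (Ne.symm hmax)⟩
  have hq_odd : (q : ℕ) % 2 = 1 := by
    have := hV.ne_of_consecutive hmV hqV hmq hq
    simp [altChi] at this
    omega
  have hq_ne : q ≠ dIdx' m := fun h => hm'V (h ▸ hqV)
  have hq_gt : 2 * (m : ℕ) + 1 < q := by
    rw [Fin.lt_def, val_dIdx] at hmq
    rw [Ne, Fin.ext_iff, val_dIdx'] at hq_ne
    omega
  have hprev := hq ⟨q - 1, by omega⟩ (hpair q _ hq_gt (by simp only; omega) hqV)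
  simp only [Fin.le_def, val_dIdx] at hprev
  omega

theorem sameBlock_dIdx_of_forall_gt {π : Finset (Finset (Fin (2 * n)))}
    (hπ : IsBiNonCrossing (altChi n) π)
    (halt : ∀ V ∈ π, IsAlternating (altChi n) (V.sort (· ≤ ·))) (m : Fin n)
    (hgt : ∀ j : Fin n, m < j → SameBlock π (dIdx j) (dIdx' j)) :
    SameBlock π (dIdx m) (dIdx' m) := by
  by_contra hne
  obtain ⟨V, ⟨hV, hmV⟩, -⟩ := hπ.1.2 (dIdx m)
  obtain ⟨W, ⟨hW, hmW⟩, -⟩ := hπ.1.2 (dIdx' m)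
  have hpair : ∀ U ∈ π, ∀ y z : Fin (2 * n), 2 * (m : ℕ) + 1 < y →
      (y : ℕ) / 2 = (z : ℕ) / 2 → y ∈ U → z ∈ U := fun U hU y z hy hyz =>
    mem_of_div_two_eq hπ.1 (hgt ⟨y / 2, by omega⟩ (by simp only [Fin.lt_def]; omega)) hU rfl
      hyz.symm
  obtain ⟨p, hpW, hpm, hp⟩ := exists_greatest_lt (exists_mem_lt_dIdx' (halt W hW) (hpair W hW) hmW)
  have hp_even : (p : ℕ) % 2 = 0 := by
    have := (halt W hW).ne_of_consecutive hpW hmW hpm hp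
    simp [altChi] at this
    omega
  have hp_lt : p < dIdx m := by
    have hp_ne : p ≠ dIdx m := fun h => hne ⟨W, hW, h ▸ hpW, hmW⟩
    rw [Fin.lt_def, val_dIdx'] at hpm
    rw [Ne, Fin.ext_iff, val_dIdx] at hp_ne
    rw [Fin.lt_def, val_dIdx]
    omega
  have hVne : V.Nonempty := ⟨_, hmV⟩
  have hends := (halt V hV).min'_ne_max' hVne
  rw [max'_eq_dIdx (halt V hV) (hpair V hV) hmV fun h => hne ⟨V, hV, hmV, h⟩] at hends
  have hmin_odd : (V.min' hVne : ℕ) % 2 = 1 := by simp [altChi] at hends; omega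
  have hmin_lt : V.min' hVne < dIdx' m := by
    have := min'_le V _ hmV
    rw [Fin.le_def, val_dIdx] at this
    rw [Fin.lt_def, val_dIdx']
    omega
  obtain ⟨B, hB, hpB, hmB⟩ := hπ.2 p (dIdx m) (dIdx' m) (V.min' hVne)
    (chiRank_lt_chiRank_of_left (by simpa) (by simp) hp_lt)
    (chiRank_lt_chiRank_of_left_of_right (by simp) (by simp))
    (chiRank_lt_chiRank_of_right (by simpa) (by simp) hmin_lt)
    ⟨W, hW, hpW, hmW⟩ ⟨V, hV, hmV, min'_mem V hVne⟩
  exact hne ⟨W, hW, hπ.1.eq_of_mem hB hW hpB hpW ▸ hmB, hmW⟩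

theorem mem_BNCb_of_isAlternating {π : Finset (Finset (Fin (2 * n)))} (hπ : π ∈ BNC (altChi n))
    (halt : ∀ V ∈ π, IsAlternating (altChi n) (V.sort (· ≤ ·))) : π ∈ BNCb n := by
  classical
  refine mem_filter.2 ⟨hπ, fun m => ?_⟩
  induction m using WellFoundedGT.induction with
  | _ m ih => exact sameBlock_dIdx_of_forall_gt (mem_BNC_iff.1 hπ) halt m ih

theorem interleave_mem {A K : Type*} {C' D' : K → Set A} {ε : Fin (2 * n) → K} {T S : Fin n → A}
    (hT : ∀ m : Fin n, T m ∈ C' (ε (dIdx m))) (hS : ∀ m : Fin n, S m ∈ D' (ε (dIdx' m)))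
    (v : Fin (2 * n)) : interleave T S v ∈ if altChi n v then C' (ε v) else D' (ε v) := by
  have hv : (v : ℕ) / 2 < n := by omega
  rcases Nat.mod_two_eq_zero_or_one v with h | h
  · have hd : dIdx ⟨v / 2, hv⟩ = v := Fin.ext (by rw [val_dIdx]; simp only; omega)
    simpa [interleave, h, hd] using hT ⟨v / 2, hv⟩
  · have hd : dIdx' ⟨v / 2, hv⟩ = v := Fin.ext (by rw [val_dIdx']; simp only; omega)
    simpa [interleave, h, hd] using hS ⟨v / 2, hv⟩

end BiFreeNL

open BiFreeNL in
theorem moment_terms_vanish_off_boolean_partitions_general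
    {A : Type*} [Ring A] [Algebra ℂ A] {K : Type*}
    (φ : A →ₗ[ℂ] ℂ)
    (μ : MoebiusFamily)
    (C' D' : K → Set A) (hsys : BiFreeBooleanSystem φ μ C' D')
    (n : ℕ)
    (ε : Fin (2 * n) → K)
    (T S : Fin n → A)
    (hT : ∀ m : Fin n, T m ∈ C' (ε (dIdx m)))
    (hS : ∀ m : Fin n, S m ∈ D' (ε (dIdx' m)))
    (π : Finset (Finset (Fin (2 * n)))) (hπ : π ∈ BNC (altChi n))
    (hπε : ∀ i j : Fin (2 * n), SameBlock π i j → ε i = ε j)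
    (hπb : π ∉ BNCb n) :
    phiPart φ (interleave T S) π = 0 := by
  obtain ⟨-, -, -, -, -, -, hCC, hDD, hCDC, hDCD⟩ := hsys
  by_contra hne
  refine hπb (mem_BNCb_of_isAlternating hπ fun V hV => ?_)
  obtain ⟨v, hv⟩ := (mem_BNC_iff.1 hπ).1.1 V hV
  refine isAlternating_of_map_prod_ne_zero φ (hCC (ε v)) (hDD (ε v)) (hCDC (ε v)) (hDCD (ε v))
    (altChi n) (interleave T S) (fun i hi => ?_) fun h => hne (prod_eq_zero hV h)
  rw [hπε v i ⟨V, hV, hv, (mem_sort _).1 hi⟩]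
  exact interleave_mem hT hS i

open BiFreeNL in
/-- **Vanishing of non-Boolean moment terms in a bi-free Boolean system, scalar case.** -/
theorem moment_terms_vanish_off_boolean_partitions
    {A : Type*} [Ring A] [Algebra ℂ A] {K : Type*}
    (φ : A →ₗ[ℂ] ℂ) (hφ : φ 1 = 1)
    (μ : MoebiusFamily) (hμ : ∀ (n : ℕ) (χ : Fin n → Bool), IsMoebius χ (μ n χ))
    (C' D' : K → Set A) (hsys : BiFreeBooleanSystem φ μ C' D')
    (n : ℕ) (hn : 1 ≤ n)
    (ε : Fin (2 * n) → K) (hε : ∀ m : Fin n, ε (dIdx m) = ε (dIdx' m))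
    (T S : Fin n → A)
    (hT : ∀ m : Fin n, T m ∈ C' (ε (dIdx m)))
    (hS : ∀ m : Fin n, S m ∈ D' (ε (dIdx' m)))
    (π : Finset (Finset (Fin (2 * n)))) (hπ : π ∈ BNC (altChi n))
    (hπε : ∀ i j : Fin (2 * n), SameBlock π i j → ε i = ε j)
    (hπb : π ∉ BNCb n) :
    phiPart φ (interleave T S) π = 0 :=
  moment_terms_vanish_off_boolean_partitions_general φ μ C' D' hsys n ε T S hT hS π hπ hπε hπb
end
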